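/- arXiv:2212.01044 — 4 statements merged into one kernel-verified Lean document; each statement's English description precedes it below -/
import Mathlib

section
/- Let μ be a finite measure, A_1,…,A_p measurable sets, θ(K) := μ(⋃_{i∈K} A_i) for nonempty K ⊆ [p], and β(J) := μ(⋂_{j∈J} A_j ∩ ⋂_{k∉J} A_k^c). Then for every nonempty J ⊆ [p], β(J) = Σ_{K : K≠∅, J^c ⊆ K} (-1)^{|J∩K|+1} θ(K). -/
open MeasureTheory Finset

private lemma alg_key {p : ℕ} (J : Finset (Fin p)) (hJ : J.Nonempty) (b : Fin p → ℝ) :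
    (∏ j ∈ J, (1 - b j)) * ∏ k ∈ Jᶜ, b k =
      ∑ K ∈ Finset.univ.filter (fun K : Finset (Fin p) => K.Nonempty ∧ Jᶜ ⊆ K),
        (-1 : ℝ) ^ ((J ∩ K).card + 1) * (1 - ∏ i ∈ K, b i) := by
  have hext : ∑ K ∈ Finset.univ.filter (fun K : Finset (Fin p) => K.Nonempty ∧ Jᶜ ⊆ K),
        (-1 : ℝ) ^ ((J ∩ K).card + 1) * (1 - ∏ i ∈ K, b i)
      = ∑ K ∈ Finset.univ.filter (fun K : Finset (Fin p) => Jᶜ ⊆ K),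
        (-1 : ℝ) ^ ((J ∩ K).card + 1) * (1 - ∏ i ∈ K, b i) := by
    apply Finset.sum_subset
    · intro K hK
      simp only [Finset.mem_filter, Finset.mem_univ, true_and] at hK ⊢
      exact hK.2
    · intro K hK hK'
      simp only [Finset.mem_filter, Finset.mem_univ, true_and] at hK hK'
      rcases Finset.eq_empty_or_nonempty K with h | h
      · subst h; simp
      · exact absurd ⟨h, hK⟩ hK'
  rw [hext]
  have hreindex : ∑ K ∈ Finset.univ.filter (fun K : Finset (Fin p) => Jᶜ ⊆ K),
        (-1 : ℝ) ^ ((J ∩ K).card + 1) * (1 - ∏ i ∈ K, b i)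
      = ∑ L ∈ J.powerset,
        (-1 : ℝ) ^ (L.card + 1) * (1 - (∏ i ∈ L, b i) * ∏ k ∈ Jᶜ, b k) := by
    refine Finset.sum_bij' (fun K _ => K ∩ J) (fun L _ => L ∪ Jᶜ) ?_ ?_ ?_ ?_ ?_
    · intro K hK
      simp [Finset.inter_subset_right]
    · intro L hL
      simp [Finset.subset_union_right]
    · intro K hK
      simp only [Finset.mem_filter, Finset.mem_univ, true_and] at hK
      ext x
      by_cases hx : x ∈ J
      · simp [hx]
      · have : x ∈ Jᶜ := Finset.mem_compl.2 hx
        simp [hx, hK this]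
    · intro L hL
      simp only [Finset.mem_powerset] at hL
      ext x
      by_cases hx : x ∈ J
      · simp [hx, Finset.mem_compl]
      · simp only [Finset.mem_inter, Finset.mem_union, Finset.mem_compl]
        constructor
        · rintro ⟨_, h⟩; exact absurd h hx
        · intro h; exact absurd (hL h) hx
    · intro K hK
      simp only [Finset.mem_filter, Finset.mem_univ, true_and] at hK
      have h1 : J ∩ K = K ∩ J := Finset.inter_comm _ _
      have h2 : K = (K ∩ J) ∪ Jᶜ := by
        ext x
        by_cases hx : x ∈ J
        · simp [hx, Finset.mem_compl]
        · have : x ∈ Jᶜ := Finset.mem_compl.2 hx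
          simp [hx, hK this, Finset.mem_compl]
      have hdisj : Disjoint (K ∩ J) Jᶜ := by
        apply Finset.disjoint_left.2
        intro x hx hx'
        exact (Finset.mem_compl.1 hx') (Finset.mem_inter.1 hx).2
      rw [h1]
      congr 1
      conv_lhs => rw [h2]
      rw [Finset.prod_union hdisj]
  rw [hreindex]
  have hsum1 : ∑ L ∈ J.powerset, (-1 : ℝ) ^ (L.card) = 0 := by
    have h0 := Finset.prod_add (fun _ => (-1 : ℝ)) (fun _ => 1) J
    simp only [neg_add_cancel, Finset.prod_const, one_pow, mul_one] at h0
    rw [← h0, zero_pow (Finset.card_ne_zero_of_mem (Finset.mem_of_mem_inter_left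
      (Finset.mem_inter.2 ⟨hJ.choose_spec, hJ.choose_spec⟩)))]
  have hsum2 : ∑ L ∈ J.powerset, (-1 : ℝ) ^ (L.card) * ∏ i ∈ L, b i
      = ∏ j ∈ J, (1 - b j) := by
    have := Finset.prod_add (fun i => -b i) (fun _ => (1 : ℝ)) J
    simp only [Finset.prod_const_one, mul_one] at this
    have heq : ∀ j ∈ J, (-b j + 1) = (1 - b j) := by intro j _; ring
    rw [Finset.prod_congr rfl heq] at this
    rw [this]
    apply Finset.sum_congr rfl
    intro L _
    rw [← Finset.prod_const, ← Finset.prod_mul_distrib]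
    simp
  calc (∏ j ∈ J, (1 - b j)) * ∏ k ∈ Jᶜ, b k
      = -(∑ L ∈ J.powerset, (-1 : ℝ) ^ (L.card)) +
        (∑ L ∈ J.powerset, (-1 : ℝ) ^ (L.card) * ∏ i ∈ L, b i) * ∏ k ∈ Jᶜ, b k := by
        rw [hsum1, hsum2]; ring
    _ = ∑ L ∈ J.powerset,
        (-1 : ℝ) ^ (L.card + 1) * (1 - (∏ i ∈ L, b i) * ∏ k ∈ Jᶜ, b k) := by
        rw [← Finset.sum_neg_distrib, Finset.sum_mul, ← Finset.sum_add_distrib]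
        apply Finset.sum_congr rfl
        intro L _
        ring

theorem beta_via_theta {α : Type*} [MeasurableSpace α] (μ : Measure α)
    [IsFiniteMeasure μ] (p : ℕ) (A : Fin p → Set α) (hA : ∀ i, MeasurableSet (A i))
    (J : Finset (Fin p)) (hJ : J.Nonempty) :
    (μ ((⋂ j ∈ J, A j) ∩ (⋂ k ∈ Jᶜ, (A k)ᶜ))).toReal =
      ∑ K ∈ Finset.univ.filter (fun K : Finset (Fin p) => K.Nonempty ∧ Jᶜ ⊆ K),
        (-1 : ℝ) ^ ((J ∩ K).card + 1) * (μ (⋃ i ∈ K, A i)).toReal := by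
  classical
  set S : Set α := (⋂ j ∈ J, A j) ∩ (⋂ k ∈ Jᶜ, (A k)ᶜ) with hS
  have hSm : MeasurableSet S := by
    apply MeasurableSet.inter
    · exact MeasurableSet.biInter (Set.to_countable _) (fun i _ => hA i)
    · exact MeasurableSet.biInter (Set.to_countable _) (fun i _ => (hA i).compl)
  have hUm : ∀ K : Finset (Fin p), MeasurableSet (⋃ i ∈ K, A i) := fun K =>
    MeasurableSet.biUnion (Set.to_countable _) (fun i _ => hA i)
  -- pointwise identity
  have hpt : ∀ x, S.indicator (1 : α → ℝ) x =
      ∑ K ∈ Finset.univ.filter (fun K : Finset (Fin p) => K.Nonempty ∧ Jᶜ ⊆ K),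
        (-1 : ℝ) ^ ((J ∩ K).card + 1) * (⋃ i ∈ K, A i).indicator (1 : α → ℝ) x := by
    intro x
    set b : Fin p → ℝ := fun i => if x ∈ A i then 0 else 1 with hb
    have hU : ∀ K : Finset (Fin p),
        (⋃ i ∈ K, A i).indicator (1 : α → ℝ) x = 1 - ∏ i ∈ K, b i := by
      intro K
      by_cases h : x ∈ ⋃ i ∈ K, A i
      · obtain ⟨i, hi, hxi⟩ := Set.mem_iUnion₂.1 h
        have : ∏ i ∈ K, b i = 0 := Finset.prod_eq_zero hi (by simp [hb, hxi])
        simp [Set.indicator_of_mem h, this]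
      · have : ∏ i ∈ K, b i = 1 := by
          apply Finset.prod_eq_one
          intro i hi
          have : x ∉ A i := fun hxi => h (Set.mem_iUnion₂.2 ⟨i, hi, hxi⟩)
          simp [hb, this]
        simp [Set.indicator_of_notMem h, this]
    have hSind : S.indicator (1 : α → ℝ) x = (∏ j ∈ J, (1 - b j)) * ∏ k ∈ Jᶜ, b k := by
      by_cases h : x ∈ S
      · rw [Set.indicator_of_mem h]
        obtain ⟨h1, h2⟩ := h
        have h1' : ∀ j ∈ J, x ∈ A j := by
          intro j hj; exact Set.mem_iInter₂.1 h1 j hj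
        have h2' : ∀ k ∈ Jᶜ, x ∉ A k := by
          intro k hk; exact Set.mem_iInter₂.1 h2 k hk
        rw [Finset.prod_eq_one (fun j hj => by simp [hb, h1' j hj]),
            Finset.prod_eq_one (fun k hk => by simp [hb, h2' k hk])]
        norm_num
      · rw [Set.indicator_of_notMem h]
        rw [hS, Set.mem_inter_iff, not_and_or] at h
        rcases h with h | h
        · obtain ⟨j, hj⟩ := by
            simpa using (Set.mem_iInter₂.not.1 h)
          rw [Finset.prod_eq_zero hj.1 (by simp [hb, hj.2])]
          ring
        · obtain ⟨k, hk⟩ := by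
            simpa using (Set.mem_iInter₂.not.1 h)
          rw [Finset.prod_eq_zero (Finset.mem_compl.2 hk.1) (by simp [hb, hk.2])]
          ring
    rw [hSind, alg_key J hJ b]
    apply Finset.sum_congr rfl
    intro K _
    rw [hU K]
  -- integrate
  have hint : ∀ K : Finset (Fin p),
      Integrable (fun x => (-1 : ℝ) ^ ((J ∩ K).card + 1) *
        (⋃ i ∈ K, A i).indicator (1 : α → ℝ) x) μ := by
    intro K
    apply Integrable.const_mul
    rw [integrable_indicator_iff (hUm K)]
    exact integrableOn_const (measure_lt_top μ _).ne
  calc (μ S).toReal = ∫ x, S.indicator (1 : α → ℝ) x ∂μ :=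
        (integral_indicator_one hSm).symm
    _ = ∫ x, ∑ K ∈ Finset.univ.filter (fun K : Finset (Fin p) => K.Nonempty ∧ Jᶜ ⊆ K),
          (-1 : ℝ) ^ ((J ∩ K).card + 1) * (⋃ i ∈ K, A i).indicator (1 : α → ℝ) x ∂μ := by
        exact integral_congr_ae (Filter.Eventually.of_forall hpt)
    _ = ∑ K ∈ Finset.univ.filter (fun K : Finset (Fin p) => K.Nonempty ∧ Jᶜ ⊆ K),
          ∫ x, (-1 : ℝ) ^ ((J ∩ K).card + 1) * (⋃ i ∈ K, A i).indicator (1 : α → ℝ) x ∂μ :=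
        integral_finset_sum _ (fun K _ => hint K)
    _ = ∑ K ∈ Finset.univ.filter (fun K : Finset (Fin p) => K.Nonempty ∧ Jᶜ ⊆ K),
          (-1 : ℝ) ^ ((J ∩ K).card + 1) * (μ (⋃ i ∈ K, A i)).toReal := by
        apply Finset.sum_congr rfl
        intro K _
        rw [integral_const_mul, integral_indicator_one (hUm K), measureReal_def]
end

section
/- Let g_1,…,g_p ∈ L¹([0,1], Leb) be (not necessarily non-negative) integrable functions. Then there exist non-negative integrable functions f_1,…,f_p ∈ L¹([0,1], Leb) such that ∫|f_i − f_j| = ∫|g_i − g_j| for all i,j ∈ [p], and moreover ∫ f_i = ∫ f_j for all i,j ∈ [p] (all f_i have the same integral). -/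
open MeasureTheory Set

private lemma comp_half1 (H : ℝ → ℝ)
    (h : Integrable H (volume.restrict (Set.Icc (0:ℝ) 1))) :
    IntegrableOn (fun x => H (2*x)) (Set.Icc (0:ℝ) (1/2)) volume ∧
      ∫ x in Set.Icc (0:ℝ) (1/2), H (2*x) = (1/2) * ∫ y in Set.Icc (0:ℝ) 1, H y := by
  set G : ℝ → ℝ := (Set.Icc (0:ℝ) 1).indicator H with hGdef
  have hG : Integrable G volume := (integrable_indicator_iff measurableSet_Icc).2 h
  have ind : ∀ x : ℝ, (Set.Icc (0:ℝ) (1/2)).indicator (fun x => H (2*x)) x = G (2*x) := by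
    intro x
    have hmem : x ∈ Set.Icc (0:ℝ) (1/2) ↔ (2*x) ∈ Set.Icc (0:ℝ) 1 := by
      simp only [Set.mem_Icc]
      constructor <;> intro ⟨h1, h2⟩ <;> constructor <;> linarith
    by_cases hx : x ∈ Set.Icc (0:ℝ) (1/2)
    · rw [Set.indicator_of_mem hx, hGdef, Set.indicator_of_mem (hmem.1 hx)]
    · rw [Set.indicator_of_notMem hx, hGdef,
        Set.indicator_of_notMem (fun hc => hx (hmem.2 hc))]
  have hGc : Integrable (fun x => G (2*x)) volume := hG.comp_mul_left' two_ne_zero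
  constructor
  · exact (integrable_indicator_iff measurableSet_Icc).mp
      (hGc.congr (Filter.Eventually.of_forall fun x => (ind x).symm))
  · rw [← integral_indicator measurableSet_Icc]
    calc ∫ x, (Set.Icc (0:ℝ) (1/2)).indicator (fun x => H (2*x)) x
        = ∫ x, G (2*x) := by exact integral_congr_ae (Filter.Eventually.of_forall ind)
      _ = |(2:ℝ)⁻¹| • ∫ y, G y := Measure.integral_comp_mul_left G 2
      _ = (1/2) * ∫ y in Set.Icc (0:ℝ) 1, H y := by
          rw [integral_indicator measurableSet_Icc]
          norm_num [smul_eq_mul]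

private lemma comp_half2 (H : ℝ → ℝ)
    (h : Integrable H (volume.restrict (Set.Icc (0:ℝ) 1))) :
    IntegrableOn (fun x => H (2*x - 1)) (Set.Ioc (1/2:ℝ) 1) volume ∧
      ∫ x in Set.Ioc (1/2:ℝ) 1, H (2*x - 1) = (1/2) * ∫ y in Set.Icc (0:ℝ) 1, H y := by
  have h' : Integrable H (volume.restrict (Set.Ioc (0:ℝ) 1)) :=
    h.mono_measure (Measure.restrict_mono Set.Ioc_subset_Icc_self le_rfl)
  set G : ℝ → ℝ := (Set.Ioc (0:ℝ) 1).indicator H with hGdef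
  have hG : Integrable G volume := (integrable_indicator_iff measurableSet_Ioc).2 h'
  set K : ℝ → ℝ := fun y => G (-1 + y) with hKdef
  have hK : Integrable K volume := hG.comp_add_left (-1)
  have hKint : ∫ y, K y = ∫ y, G y := integral_add_left_eq_self G (-1)
  have ind : ∀ x : ℝ, (Set.Ioc (1/2:ℝ) 1).indicator (fun x => H (2*x - 1)) x = K (2*x) := by
    intro x
    have harg : -1 + 2*x = 2*x - 1 := by ring
    have hmem : x ∈ Set.Ioc (1/2:ℝ) 1 ↔ (2*x - 1) ∈ Set.Ioc (0:ℝ) 1 := by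
      simp only [Set.mem_Ioc]
      constructor <;> intro ⟨h1, h2⟩ <;> constructor <;> linarith
    rw [hKdef]
    simp only [harg]
    by_cases hx : x ∈ Set.Ioc (1/2:ℝ) 1
    · rw [Set.indicator_of_mem hx, hGdef, Set.indicator_of_mem (hmem.1 hx)]
    · rw [Set.indicator_of_notMem hx, hGdef,
        Set.indicator_of_notMem (fun hc => hx (hmem.2 hc))]
  have hKc : Integrable (fun x => K (2*x)) volume := hK.comp_mul_left' two_ne_zero
  constructor
  · exact (integrable_indicator_iff measurableSet_Ioc).mp
      (hKc.congr (Filter.Eventually.of_forall fun x => (ind x).symm))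
  · rw [← integral_indicator measurableSet_Ioc]
    calc ∫ x, (Set.Ioc (1/2:ℝ) 1).indicator (fun x => H (2*x - 1)) x
        = ∫ x, K (2*x) := integral_congr_ae (Filter.Eventually.of_forall ind)
      _ = |(2:ℝ)⁻¹| • ∫ y, K y := Measure.integral_comp_mul_left K 2
      _ = (1/2) * ∫ y in Set.Icc (0:ℝ) 1, H y := by
          rw [hKint, integral_indicator measurableSet_Ioc,
            ← integral_Icc_eq_integral_Ioc]
          norm_num [smul_eq_mul]

private lemma disj_halves : Disjoint (Set.Icc (0:ℝ) (1/2)) (Set.Ioc (1/2:ℝ) 1) := by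
  rw [Set.disjoint_left]
  rintro x ⟨_, hx2⟩ ⟨hx3, _⟩
  linarith

private lemma union_halves : Set.Icc (0:ℝ) (1/2) ∪ Set.Ioc (1/2:ℝ) 1 = Set.Icc (0:ℝ) 1 :=
  Set.Icc_union_Ioc_eq_Icc (by norm_num) (by norm_num)

/-- Master lemma: glued function integrability and integral. -/
private lemma glue_spec (H₁ H₂ : ℝ → ℝ)
    (h1 : Integrable H₁ (volume.restrict (Set.Icc (0:ℝ) 1)))
    (h2 : Integrable H₂ (volume.restrict (Set.Icc (0:ℝ) 1))) :
    Integrable (fun x => if x ≤ 1/2 then H₁ (2*x) else H₂ (2*x - 1))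
        (volume.restrict (Set.Icc (0:ℝ) 1)) ∧
      ∫ x in Set.Icc (0:ℝ) 1, (if x ≤ 1/2 then H₁ (2*x) else H₂ (2*x - 1)) =
        (1/2) * (∫ y in Set.Icc (0:ℝ) 1, H₁ y) + (1/2) * (∫ y in Set.Icc (0:ℝ) 1, H₂ y) := by
  obtain ⟨hi1, he1⟩ := comp_half1 H₁ h1
  obtain ⟨hi2, he2⟩ := comp_half2 H₂ h2
  set F : ℝ → ℝ := fun x => if x ≤ 1/2 then H₁ (2*x) else H₂ (2*x - 1) with hF
  have eq1 : Set.EqOn (fun x => H₁ (2*x)) F (Set.Icc (0:ℝ) (1/2)) :=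
    fun x hx => (if_pos hx.2).symm
  have eq2 : Set.EqOn (fun x => H₂ (2*x - 1)) F (Set.Ioc (1/2:ℝ) 1) :=
    fun x hx => (if_neg (not_le.2 hx.1)).symm
  have hi1' : IntegrableOn F (Set.Icc (0:ℝ) (1/2)) volume :=
    hi1.congr_fun eq1 measurableSet_Icc
  have hi2' : IntegrableOn F (Set.Ioc (1/2:ℝ) 1) volume :=
    hi2.congr_fun eq2 measurableSet_Ioc
  have hint : IntegrableOn F (Set.Icc (0:ℝ) 1) volume := by
    rw [← union_halves]; exact hi1'.union hi2'
  refine ⟨hint, ?_⟩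
  have : ∫ x in Set.Icc (0:ℝ) 1, F x
      = (∫ x in Set.Icc (0:ℝ) (1/2), F x) + ∫ x in Set.Ioc (1/2:ℝ) 1, F x := by
    rw [← union_halves]
    exact setIntegral_union disj_halves measurableSet_Ioc hi1' hi2'
  rw [this, setIntegral_congr_fun measurableSet_Icc eq1.symm,
    setIntegral_congr_fun measurableSet_Ioc eq2.symm, he1, he2]

theorem nonneg_equal_scale_embedding (p : ℕ) (g : Fin p → ℝ → ℝ)
    (hg : ∀ i, Integrable (g i) (volume.restrict (Set.Icc (0:ℝ) 1))) :
    ∃ f : Fin p → ℝ → ℝ,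
      (∀ i x, 0 ≤ f i x) ∧
      (∀ i, Integrable (f i) (volume.restrict (Set.Icc (0:ℝ) 1))) ∧
      (∀ i j, ∫ x in Set.Icc (0:ℝ) 1, |f i x - f j x| = ∫ x in Set.Icc (0:ℝ) 1, |g i x - g j x|) ∧
      (∀ i j, ∫ x in Set.Icc (0:ℝ) 1, f i x = ∫ x in Set.Icc (0:ℝ) 1, f j x) := by
  classical
  set M : ℝ → ℝ := fun x => ∑ i, |g i x| with hMdef
  have hM : Integrable M (volume.restrict (Set.Icc (0:ℝ) 1)) :=
    integrable_finset_sum _ fun i _ => (hg i).abs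
  have hMge : ∀ (i : Fin p) (y : ℝ), |g i y| ≤ M y := by
    intro i y
    exact Finset.single_le_sum (fun j _ => abs_nonneg (g j y)) (Finset.mem_univ i)
  refine ⟨fun i x => if x ≤ 1/2 then M (2*x) - g i (2*x) else M (2*x - 1) + g i (2*x - 1),
    ?_, ?_, ?_, ?_⟩
  · intro i x
    by_cases hx : x ≤ 1/2
    · simp only [hx, if_true]
      have h1 := hMge i (2*x)
      have h2 := le_abs_self (g i (2*x))
      linarith
    · simp only [hx, if_false]
      have h1 := hMge i (2*x - 1)
      have h2 := neg_abs_le (g i (2*x - 1))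
      linarith
  · intro i
    exact (glue_spec (fun y => M y - g i y) (fun y => M y + g i y)
      (hM.sub (hg i)) (hM.add (hg i))).1
  · intro i j
    have hfun : (fun x => |(if x ≤ 1/2 then M (2*x) - g i (2*x) else M (2*x-1) + g i (2*x-1)) -
        (if x ≤ 1/2 then M (2*x) - g j (2*x) else M (2*x-1) + g j (2*x-1))|) =
        fun x => if x ≤ 1/2 then (fun y => |g i y - g j y|) (2*x)
          else (fun y => |g i y - g j y|) (2*x - 1) := by
      funext x
      by_cases hx : x ≤ 1/2
      · simp only [hx, if_true]
        rw [show M (2*x) - g i (2*x) - (M (2*x) - g j (2*x)) = -(g i (2*x) - g j (2*x)) by ring,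
          abs_neg]
      · simp only [hx, if_false]
        ring_nf
    have habs : Integrable (fun y => |g i y - g j y|) (volume.restrict (Set.Icc (0:ℝ) 1)) :=
      ((hg i).sub (hg j)).abs
    have := (glue_spec (fun y => |g i y - g j y|) (fun y => |g i y - g j y|) habs habs).2
    calc ∫ x in Set.Icc (0:ℝ) 1, |(if x ≤ 1/2 then M (2*x) - g i (2*x) else M (2*x-1) + g i (2*x-1)) -
          (if x ≤ 1/2 then M (2*x) - g j (2*x) else M (2*x-1) + g j (2*x-1))|
        = ∫ x in Set.Icc (0:ℝ) 1, (if x ≤ 1/2 then (fun y => |g i y - g j y|) (2*x)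
            else (fun y => |g i y - g j y|) (2*x - 1)) := by rw [hfun]
      _ = (1/2) * (∫ y in Set.Icc (0:ℝ) 1, |g i y - g j y|)
            + (1/2) * (∫ y in Set.Icc (0:ℝ) 1, |g i y - g j y|) := this
      _ = ∫ y in Set.Icc (0:ℝ) 1, |g i y - g j y| := by ring
  · intro i j
    have key : ∀ k : Fin p, ∫ x in Set.Icc (0:ℝ) 1,
        (if x ≤ 1/2 then M (2*x) - g k (2*x) else M (2*x-1) + g k (2*x-1)) =
        ∫ y in Set.Icc (0:ℝ) 1, M y := by
      intro k
      have := (glue_spec (fun y => M y - g k y) (fun y => M y + g k y)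
        (hM.sub (hg k)) (hM.add (hg k))).2
      rw [this, integral_sub hM (hg k), integral_add hM (hg k)]
      ring
    rw [key i, key j]
end

section
/- Let d(i,j) = Σ_{k=i}^{j-1} w_k (for i ≤ j) be a line metric on [p] with w_k ≥ 0, and suppose β(J) ≥ 0, for nonempty J ⊆ [p], satisfy d(i,j) = Σ_J β(J)|1_J(i) − 1_J(j)| for all i,j. Then β(J) > 0 implies J = {1,…,k} or J = {k,…,p} for some k ∈ [p]. -/
open Finset

/-- indicator of a finite cut as a real number -/
noncomputable def cutInd {p : ℕ} (J : Finset (Fin p)) (i : Fin p) : ℝ :=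
  if i ∈ J then 1 else 0

/-- A line metric on `Fin p` (points in increasing order with consecutive gaps `w k`). -/
noncomputable def lineDist {p : ℕ} (w : ℕ → ℝ) (i j : Fin p) : ℝ :=
  ∑ k ∈ Finset.Ico (min i.1 j.1) (max i.1 j.1), w k

theorem line_metric_cuts_are_prefix_or_suffix (p : ℕ) (w : ℕ → ℝ) (hw : ∀ k, 0 ≤ w k)
    (β : Finset (Fin p) → ℝ) (hβ : ∀ J, 0 ≤ β J)
    (hd : ∀ i j : Fin p, lineDist w i j =
      ∑ J ∈ Finset.univ.filter (fun J : Finset (Fin p) => J.Nonempty),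
        β J * |cutInd J i - cutInd J j|) :
    ∀ J : Finset (Fin p), J.Nonempty → 0 < β J →
      ∃ k : Fin p, J = Finset.univ.filter (fun x : Fin p => x ≤ k) ∨
        J = Finset.univ.filter (fun x : Fin p => k ≤ x) := by
  intro J hJ hβJ
  by_contra hcon
  push_neg at hcon
  obtain ⟨a, b, c, hab, hbc, hpat⟩ :
      ∃ a b c : Fin p, a < b ∧ b < c ∧
        ((a ∈ J ∧ b ∉ J ∧ c ∈ J) ∨ (a ∉ J ∧ b ∈ J ∧ c ∉ J)) := by
    set a := J.min' hJ with ha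
    set c := J.max' hJ with hc
    by_cases hmid : ∃ b : Fin p, a < b ∧ b < c ∧ b ∉ J
    · obtain ⟨b, h1, h2, h3⟩ := hmid
      exact ⟨a, b, c, h1, h2, Or.inl ⟨J.min'_mem hJ, h3, J.max'_mem hJ⟩⟩
    · push_neg at hmid
      have hJI : ∀ x : Fin p, x ∈ J ↔ a ≤ x ∧ x ≤ c := by
        intro x
        constructor
        · intro hx; exact ⟨J.min'_le x hx, J.le_max' x hx⟩
        · rintro ⟨h1, h2⟩
          by_contra hx
          rcases lt_or_eq_of_le h1 with h1' | h1'
          · rcases lt_or_eq_of_le h2 with h2' | h2'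
            · exact hx (hmid x h1' h2')
            · exact hx (h2' ▸ J.max'_mem hJ)
          · exact hx (h1' ▸ J.min'_mem hJ)
      by_cases ha0 : a.1 = 0
      · refine absurd ?_ (hcon c).1
        ext x
        simp only [Finset.mem_filter, Finset.mem_univ, true_and, hJI]
        constructor
        · exact fun h => h.2
        · intro h
          exact ⟨by rw [Fin.le_def, ha0]; exact Nat.zero_le _, h⟩
      · by_cases hcp : c.1 = p - 1
        · refine absurd ?_ (hcon a).2
          ext x
          simp only [Finset.mem_filter, Finset.mem_univ, true_and, hJI]
          constructor
          · exact fun h => h.1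
          · intro h
            refine ⟨h, ?_⟩
            rw [Fin.le_def, hcp]
            have := x.2
            omega
        · have hap : 0 < a.1 := Nat.pos_of_ne_zero ha0
          have hcp2 : c.1 + 1 < p := by
            have := c.2
            omega
          refine ⟨⟨a.1 - 1, by omega⟩, a, ⟨c.1 + 1, hcp2⟩, ?_, ?_, Or.inr ⟨?_, J.min'_mem hJ, ?_⟩⟩
          · rw [Fin.lt_def]; simp; omega
          · rw [Fin.lt_def]
            have : a.1 ≤ c.1 := J.min'_le c (J.max'_mem hJ)
            simp; omega
          · intro hmem
            have := ((hJI _).mp hmem).1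
            rw [Fin.le_def] at this
            simp at this
            omega
          · intro hmem
            have := ((hJI _).mp hmem).2
            rw [Fin.le_def] at this
            simp at this
  -- additivity of the line metric along a < b < c
  have h1 : a.1 < b.1 := hab
  have h2 : b.1 < c.1 := hbc
  have hadd : lineDist w a b + lineDist w b c = lineDist w a c := by
    unfold lineDist
    rw [min_eq_left h1.le, max_eq_right h1.le, min_eq_left h2.le, max_eq_right h2.le,
        min_eq_left (h1.trans h2).le, max_eq_right (h1.trans h2).le]
    exact Finset.sum_Ico_consecutive _ h1.le h2.le
  have hsum : ∑ J' ∈ Finset.univ.filter (fun J' : Finset (Fin p) => J'.Nonempty),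
      β J' * ((|cutInd J' a - cutInd J' b| + |cutInd J' b - cutInd J' c|)
        - |cutInd J' a - cutInd J' c|) = 0 := by
    simp only [mul_sub, mul_add]
    rw [Finset.sum_sub_distrib, Finset.sum_add_distrib, ← hd a b, ← hd b c, ← hd a c, hadd,
      sub_self]
  have hterm : ∀ J' ∈ Finset.univ.filter (fun J' : Finset (Fin p) => J'.Nonempty),
      0 ≤ β J' * ((|cutInd J' a - cutInd J' b| + |cutInd J' b - cutInd J' c|)
        - |cutInd J' a - cutInd J' c|) := by
    intro J' _
    refine mul_nonneg (hβ J') ?_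
    have := abs_sub_le (cutInd J' a) (cutInd J' b) (cutInd J' c)
    linarith
  have hz := (Finset.sum_eq_zero_iff_of_nonneg hterm).mp hsum J
    (by simp [hJ])
  rcases hpat with ⟨g1, g2, g3⟩ | ⟨g1, g2, g3⟩ <;>
    simp [cutInd, g1, g2, g3] at hz <;> linarith
end

section
/- Line metrics are rigid: if d(i,j) = Σ_{k=i}^{j-1} w_k is a line metric on [p] with w_k ≥ 0, and both (β(J)) and (β̃(J)) are families of non-negative coefficients indexed by nonempty J ⊆ [p] satisfying d(i,j) = Σ_J β(J)|1_J(i)−1_J(j)| = Σ_J β̃(J)|1_J(i)−1_J(j)| for all i,j, then β(J) + β(J^c) = β̃(J) + β̃(J^c) for every nonempty proper subset J ⊊ [p]. -/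
open Finset

lemma lineDist_eq {p : ℕ} (w : ℕ → ℝ) {i j : Fin p} (h : i.1 ≤ j.1) :
    lineDist w i j = ∑ k ∈ Finset.Ico i.1 j.1, w k := by
  rw [lineDist, min_eq_left h, max_eq_right h]

lemma lineDist_add {p : ℕ} (w : ℕ → ℝ) {i j k : Fin p}
    (h1 : i.1 ≤ j.1) (h2 : j.1 ≤ k.1) :
    lineDist w i j + lineDist w j k = lineDist w i k := by
  rw [lineDist_eq w h1, lineDist_eq w h2, lineDist_eq w (h1.trans h2),
    Finset.sum_Ico_consecutive _ h1 h2]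

/-- A "bad" cut: one exhibiting a non-monotone pattern along the line. -/
def Bad {p : ℕ} (J : Finset (Fin p)) : Prop :=
  ∃ i j k : Fin p, i.1 < j.1 ∧ j.1 < k.1 ∧
    ((i ∈ J ∧ j ∉ J ∧ k ∈ J) ∨ (i ∉ J ∧ j ∈ J ∧ k ∉ J))

lemma bad_compl {p : ℕ} {J : Finset (Fin p)} (h : Bad J) : Bad Jᶜ := by
  obtain ⟨i, j, k, h1, h2, h3⟩ := h
  refine ⟨i, j, k, h1, h2, ?_⟩
  simp only [Finset.mem_compl, not_not]
  tauto

lemma bad_zero {p : ℕ} (w : ℕ → ℝ) (β : Finset (Fin p) → ℝ) (hβ : ∀ J, 0 ≤ β J)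
    (hd : ∀ i j : Fin p, lineDist w i j =
      ∑ J ∈ Finset.univ.filter (fun J : Finset (Fin p) => J.Nonempty),
        β J * |cutInd J i - cutInd J j|)
    {J : Finset (Fin p)} (hbad : Bad J) : β J = 0 := by
  classical
  obtain ⟨i, j, k, hij, hjk, hpat⟩ := hbad
  set F := Finset.univ.filter (fun J : Finset (Fin p) => J.Nonempty) with hF
  have hsum : ∑ K ∈ F, β K * (|cutInd K i - cutInd K j| + |cutInd K j - cutInd K k|
      - |cutInd K i - cutInd K k|) = 0 := by
    have hexp : ∑ K ∈ F, β K * (|cutInd K i - cutInd K j| + |cutInd K j - cutInd K k|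
        - |cutInd K i - cutInd K k|) =
        (∑ K ∈ F, β K * |cutInd K i - cutInd K j|) +
        (∑ K ∈ F, β K * |cutInd K j - cutInd K k|) -
        (∑ K ∈ F, β K * |cutInd K i - cutInd K k|) := by
      rw [← Finset.sum_add_distrib, ← Finset.sum_sub_distrib]
      exact Finset.sum_congr rfl fun K _ => by ring
    rw [hexp, ← hd i j, ← hd j k, ← hd i k, lineDist_add w hij.le hjk.le, sub_self]
  have hnn : ∀ K ∈ F, 0 ≤ β K * (|cutInd K i - cutInd K j| + |cutInd K j - cutInd K k|
      - |cutInd K i - cutInd K k|) := by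
    intro K _
    refine mul_nonneg (hβ K) ?_
    have := abs_sub_le (cutInd K i) (cutInd K j) (cutInd K k)
    linarith
  have hJF : J ∈ F := by
    simp only [hF, Finset.mem_filter, Finset.mem_univ, true_and]
    rcases hpat with ⟨h1, _, _⟩ | ⟨_, h2, _⟩
    exacts [⟨i, h1⟩, ⟨j, h2⟩]
  have hz := (Finset.sum_eq_zero_iff_of_nonneg hnn).1 hsum J hJF
  rcases hpat with ⟨h1, h2, h3⟩ | ⟨h1, h2, h3⟩ <;>
    · simp only [cutInd, h1, h2, h3, if_true, if_false, not_false_iff, if_pos, if_neg] at hz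
      norm_num at hz
      linarith

lemma prefix_of_not_bad {p : ℕ} {J : Finset (Fin p)} (hp : 0 < p)
    (hne : J.Nonempty) (hproper : J ≠ Finset.univ) (h0 : (⟨0, hp⟩ : Fin p) ∈ J)
    (hb : ¬ Bad J) : ∃ t : ℕ, t + 1 < p ∧ ∀ i : Fin p, i ∈ J ↔ i.1 ≤ t := by
  have hdc : ∀ i j : Fin p, i.1 ≤ j.1 → j ∈ J → i ∈ J := by
    intro i j hle hj
    by_contra hi
    have h0i : 0 < i.1 := by
      rcases Nat.eq_zero_or_pos i.1 with h | h
      · exact absurd (show i ∈ J by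
          have hh : i = (⟨0, hp⟩ : Fin p) := Fin.ext (by simp [h])
          rw [hh]; exact h0) hi
      · exact h
    have hij : i.1 < j.1 := lt_of_le_of_ne hle (fun h => hi (by
      have hh : i = j := Fin.ext h
      rw [hh]; exact hj))
    exact hb ⟨⟨0, hp⟩, i, j, h0i, hij, Or.inl ⟨h0, hi, hj⟩⟩
  set M := J.max' hne with hM
  have hchar : ∀ i : Fin p, i ∈ J ↔ i.1 ≤ M.1 := by
    intro i
    constructor
    · intro hi
      exact Fin.le_def.1 (J.le_max' i hi)
    · intro hi
      exact hdc i M hi (J.max'_mem hne)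
  refine ⟨M.1, ?_, hchar⟩
  by_contra hMp
  apply hproper
  apply Finset.eq_univ_iff_forall.2
  intro i
  exact (hchar i).2 (by omega)

lemma monotone_char {p : ℕ} {J : Finset (Fin p)} (hne : J.Nonempty)
    (hproper : J ≠ Finset.univ) (hb : ¬ Bad J) :
    ∃ t : ℕ, t + 1 < p ∧
      ((∀ i : Fin p, i ∈ J ↔ i.1 ≤ t) ∨ (∀ i : Fin p, i ∈ J ↔ t < i.1)) := by
  have hp : 0 < p := by
    obtain ⟨x, _⟩ := hne
    exact x.pos
  by_cases h0 : (⟨0, hp⟩ : Fin p) ∈ J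
  · obtain ⟨t, ht, hchar⟩ := prefix_of_not_bad hp hne hproper h0 hb
    exact ⟨t, ht, Or.inl hchar⟩
  · have hne' : Jᶜ.Nonempty := by
      obtain ⟨x, hx⟩ : ∃ x, x ∉ J := by
        by_contra h
        push_neg at h
        exact hproper (Finset.eq_univ_iff_forall.2 h)
      exact ⟨x, Finset.mem_compl.2 hx⟩
    have hproper' : Jᶜ ≠ Finset.univ := by
      intro h
      obtain ⟨x, hx⟩ := hne
      have hxc : x ∈ Jᶜ := h ▸ Finset.mem_univ x
      exact (Finset.mem_compl.1 hxc) hx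
    have hb' : ¬ Bad Jᶜ := fun h => hb (by simpa using bad_compl h)
    obtain ⟨t, ht, hchar⟩ := prefix_of_not_bad hp hne' hproper' (Finset.mem_compl.2 h0) hb'
    refine ⟨t, ht, Or.inr fun i => ?_⟩
    have h1 : i ∉ J ↔ i.1 ≤ t := by
      simpa only [Finset.mem_compl] using hchar i
    constructor
    · intro hi
      by_contra hlt
      exact (h1.2 (by omega)) hi
    · intro hlt
      by_contra hi
      have := h1.1 hi
      omega

lemma sum_pair_eq {p : ℕ} (w : ℕ → ℝ) (β : Finset (Fin p) → ℝ) (hβ : ∀ J, 0 ≤ β J)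
    (hd : ∀ i j : Fin p, lineDist w i j =
      ∑ J ∈ Finset.univ.filter (fun J : Finset (Fin p) => J.Nonempty),
        β J * |cutInd J i - cutInd J j|)
    {J : Finset (Fin p)} {t : ℕ} (ht : t + 1 < p)
    (hchar : ∀ i : Fin p, i ∈ J ↔ i.1 ≤ t) :
    β J + β Jᶜ = w t := by
  classical
  set F := Finset.univ.filter (fun J : Finset (Fin p) => J.Nonempty) with hF
  set i0 : Fin p := ⟨t, by omega⟩ with hi0
  set i1 : Fin p := ⟨t + 1, ht⟩ with hi1
  have hld : lineDist w i0 i1 = w t := by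
    rw [lineDist]
    have h1 : min i0.1 i1.1 = t := by simp [hi0, hi1]
    have h2 : max i0.1 i1.1 = t + 1 := by simp [hi0, hi1]
    rw [h1, h2]
    simp
  have hmemJ : i0 ∈ J := (hchar i0).2 le_rfl
  have hnm : i1 ∉ J := fun h => by have := (hchar i1).1 h; simp [hi1] at this
  have hJc1 : i1 ∈ Jᶜ := Finset.mem_compl.2 hnm
  have hJc0 : i0 ∉ Jᶜ := fun h => (Finset.mem_compl.1 h) hmemJ
  have hJne : J.Nonempty := ⟨i0, hmemJ⟩
  have hJcne : Jᶜ.Nonempty := ⟨i1, hJc1⟩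
  have hneq : J ≠ Jᶜ := fun h => hJc0 (h ▸ hmemJ)
  have hsub : ({J, Jᶜ} : Finset (Finset (Fin p))) ⊆ F := by
    intro K hK
    simp only [Finset.mem_insert, Finset.mem_singleton] at hK
    simp only [hF, Finset.mem_filter, Finset.mem_univ, true_and]
    rcases hK with rfl | rfl
    exacts [hJne, hJcne]
  have hzero : ∀ K ∈ F, K ∉ ({J, Jᶜ} : Finset (Finset (Fin p))) →
      β K * |cutInd K i0 - cutInd K i1| = 0 := by
    intro K hKF hKn
    simp only [Finset.mem_insert, Finset.mem_singleton, not_or] at hKn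
    obtain ⟨hKJ, hKJc⟩ := hKn
    have hKne : K.Nonempty := by
      simpa only [hF, Finset.mem_filter, Finset.mem_univ, true_and] using hKF
    by_cases h0 : i0 ∈ K <;> by_cases h1 : i1 ∈ K
    · simp [cutInd, h0, h1]
    · -- i0 ∈ K, i1 ∉ K
      by_cases hbK : Bad K
      · rw [bad_zero w β hβ hd hbK, zero_mul]
      · exfalso
        have hKuniv : K ≠ Finset.univ := fun h => h1 (h ▸ Finset.mem_univ i1)
        obtain ⟨s, hs, hc | hc⟩ := monotone_char hKne hKuniv hbK
        · have e0 : t ≤ s := (hc i0).1 h0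
          have e1 : ¬ (t + 1 ≤ s) := fun h => h1 ((hc i1).2 h)
          have hst : s = t := by omega
          subst hst
          exact hKJ (Finset.ext fun i => (hc i).trans (hchar i).symm)
        · have e0 : s < t := (hc i0).1 h0
          have e1 : ¬ (s < t + 1) := fun h => h1 ((hc i1).2 h)
          omega
    · -- i0 ∉ K, i1 ∈ K
      by_cases hbK : Bad K
      · rw [bad_zero w β hβ hd hbK, zero_mul]
      · exfalso
        have hKuniv : K ≠ Finset.univ := fun h => h0 (h ▸ Finset.mem_univ i0)
        obtain ⟨s, hs, hc | hc⟩ := monotone_char hKne hKuniv hbK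
        · have e0 : ¬ (t ≤ s) := fun h => h0 ((hc i0).2 h)
          have e1 : t + 1 ≤ s := (hc i1).1 h1
          omega
        · have e0 : ¬ (s < t) := fun h => h0 ((hc i0).2 h)
          have e1 : s < t + 1 := (hc i1).1 h1
          have hst : s = t := by omega
          subst hst
          refine hKJc (Finset.ext fun i => ?_)
          rw [hc i, Finset.mem_compl, hchar i]
          omega
    · simp [cutInd, h0, h1]
  have hpairsum : ∑ K ∈ ({J, Jᶜ} : Finset (Finset (Fin p))),
      β K * |cutInd K i0 - cutInd K i1| =
      ∑ K ∈ F, β K * |cutInd K i0 - cutInd K i1| :=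
    Finset.sum_subset hsub hzero
  have hdd := hd i0 i1
  rw [hld, ← hpairsum, Finset.sum_pair hneq] at hdd
  have c1 : cutInd J i0 = 1 := if_pos hmemJ
  have c2 : cutInd J i1 = 0 := if_neg hnm
  have c3 : cutInd Jᶜ i0 = 0 := if_neg hJc0
  have c4 : cutInd Jᶜ i1 = 1 := if_pos hJc1
  rw [c1, c2, c3, c4] at hdd
  norm_num at hdd
  linarith

theorem line_metrics_are_rigid (p : ℕ) (w : ℕ → ℝ) (hw : ∀ k, 0 ≤ w k)
    (β β' : Finset (Fin p) → ℝ) (hβ : ∀ J, 0 ≤ β J) (hβ' : ∀ J, 0 ≤ β' J)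
    (hd : ∀ i j : Fin p, lineDist w i j =
      ∑ J ∈ Finset.univ.filter (fun J : Finset (Fin p) => J.Nonempty),
        β J * |cutInd J i - cutInd J j|)
    (hd' : ∀ i j : Fin p, lineDist w i j =
      ∑ J ∈ Finset.univ.filter (fun J : Finset (Fin p) => J.Nonempty),
        β' J * |cutInd J i - cutInd J j|) :
    ∀ J : Finset (Fin p), J.Nonempty → J ≠ Finset.univ →
      β J + β Jᶜ = β' J + β' Jᶜ := by
  intro J hne hproper
  by_cases hb : Bad J
  · rw [bad_zero w β hβ hd hb, bad_zero w β hβ hd (bad_compl hb),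
      bad_zero w β' hβ' hd' hb, bad_zero w β' hβ' hd' (bad_compl hb)]
  · obtain ⟨t, ht, hchar | hchar⟩ := monotone_char hne hproper hb
    · rw [sum_pair_eq w β hβ hd ht hchar, sum_pair_eq w β' hβ' hd' ht hchar]
    · have hchar' : ∀ i : Fin p, i ∈ Jᶜ ↔ i.1 ≤ t := by
        intro i
        rw [Finset.mem_compl, hchar i]
        omega
      have h1 := sum_pair_eq w β hβ hd ht hchar'
      have h2 := sum_pair_eq w β' hβ' hd' ht hchar'
      rw [compl_compl] at h1 h2
      linarith
end
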